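/- Let L be a distributive meet semi-lattice with top. Then φ(a ⊓ b) = φ(a) ∩ φ(b) for all a, b ∈ L, and a ≤ b if and only if φ(a) ⊆ φ(b); in particular φ is an injective meet-semilattice homomorphism, so L is isomorphic to the meet semi-lattice ⟨{φ(a) : a ∈ L}, ∩⟩. -/

import Mathlib

/-- A filter of a meet semi-lattice: a nonempty upper set closed under meets. -/
def IsSLFilter {L : Type*} [SemilatticeInf L] (F : Set L) : Prop :=
  F.Nonempty ∧ (∀ a b : L, a ∈ F → a ≤ b → b ∈ F) ∧
    (∀ a b : L, a ∈ F → b ∈ F → a ⊓ b ∈ F)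

/-- A prime (meet-prime) filter of a meet semi-lattice. -/
def IsSLPrimeFilter {L : Type*} [SemilatticeInf L] (F : Set L) : Prop :=
  IsSLFilter F ∧ F ≠ Set.univ ∧
    ∀ F₁ F₂ : Set L, IsSLFilter F₁ → IsSLFilter F₂ → F₁ ∩ F₂ ⊆ F → F₁ ⊆ F ∨ F₂ ⊆ F

/-- An ideal of a meet semi-lattice: a nonempty lower set in which any two
elements have a common upper bound lying in the ideal. -/
def IsSLIdeal {L : Type*} [SemilatticeInf L] (I : Set L) : Prop :=
  I.Nonempty ∧ (∀ a b : L, a ∈ I → b ≤ a → b ∈ I) ∧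
    (∀ a b : L, a ∈ I → b ∈ I → ∃ c ∈ I, a ≤ c ∧ b ≤ c)

/-- A meet semi-lattice is distributive. -/
def IsDistribSL (L : Type*) [SemilatticeInf L] : Prop :=
  ∀ a b₁ b₂ : L, b₁ ⊓ b₂ ≤ a → ∃ c₁ c₂ : L, b₁ ≤ c₁ ∧ b₂ ≤ c₂ ∧ a = c₁ ⊓ c₂

/-- A Frink ideal of a meet semi-lattice. -/
def IsFrinkIdeal {L : Type*} [SemilatticeInf L] (I : Set L) : Prop :=
  I.Nonempty ∧ ∀ A : Finset L, A.Nonempty → ↑A ⊆ I →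
    ∀ c : L, (⋂ a ∈ A, Set.Ici a) ⊆ Set.Ici c → c ∈ I

/-- An optimal filter: a filter whose complement is a Frink ideal. -/
def IsOptimalFilter {L : Type*} [SemilatticeInf L] (F : Set L) : Prop :=
  IsSLFilter F ∧ IsFrinkIdeal Fᶜ

/-- σ(a): the set of prime filters containing `a`. -/
def sigmaSet {L : Type*} [SemilatticeInf L] (a : L) : Set (Set L) :=
  {P | IsSLPrimeFilter P ∧ a ∈ P}

/-- φ(a): the set of optimal filters containing `a`. -/
def phiSet {L : Type*} [SemilatticeInf L] (a : L) : Set (Set L) :=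
  {F | IsOptimalFilter F ∧ a ∈ F}

/-! If `a ≰ b`, Zorn's lemma gives a filter `G ∋ a` maximal among the filters missing `b`, and
`G` is optimal. By maximality every `x ∉ G` has some `g ∈ G` with `g ⊓ x ≤ b`; since `G` is
down-directed one `g` serves a whole finite `A ⊆ Gᶜ`. Distributivity makes `{q | g ⊓ q ≤ b}`
up-directed, so `A` has an upper bound `q` with `g ⊓ q ≤ b`; any `c` below every common upper
bound of `A` satisfies `c ≤ q`, and `c ∈ G` would force `b ∈ G`. -/

theorem DirectedOn.exists_mem_forall_rel_of_finset {α ι : Type*} {r : α → α → Prop}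
    [Std.Refl r] [IsTrans α r] {D : Set α} (hD : DirectedOn r D) {A : Finset ι}
    (hA : A.Nonempty) {f : ι → α} (hf : ∀ i ∈ A, f i ∈ D) : ∃ q ∈ D, ∀ i ∈ A, r (f i) q := by
  induction hA using Finset.Nonempty.cons_induction with
  | singleton i =>
    exact ⟨f i, hf i (Finset.mem_singleton_self i), by simp [refl_of r]⟩
  | cons i A hi hA ih =>
    obtain ⟨q, hq, hAq⟩ := ih fun j hj => hf j (Finset.mem_cons_of_mem hj)
    obtain ⟨q', hq', hiq', hqq'⟩ := hD _ (hf i (Finset.mem_cons_self i A)) q hq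
    exact ⟨q', hq', (Finset.forall_mem_cons hi _).mpr
      ⟨hiq', fun j hj => trans_of r (hAq j hj) hqq'⟩⟩

section

variable {L : Type*} [SemilatticeInf L] {F G : Set L} {a b : L}

namespace IsSLFilter

theorem nonempty (hF : IsSLFilter F) : F.Nonempty := hF.1

theorem mem_of_le (hF : IsSLFilter F) (ha : a ∈ F) (hab : a ≤ b) : b ∈ F := hF.2.1 a b ha hab

theorem inf_mem (hF : IsSLFilter F) (ha : a ∈ F) (hb : b ∈ F) : a ⊓ b ∈ F := hF.2.2 a b ha hb

theorem inf_mem_iff (hF : IsSLFilter F) : a ⊓ b ∈ F ↔ a ∈ F ∧ b ∈ F :=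
  ⟨fun h => ⟨hF.mem_of_le h inf_le_left, hF.mem_of_le h inf_le_right⟩,
    fun h => hF.inf_mem h.1 h.2⟩

theorem directedOn_ge (hF : IsSLFilter F) : DirectedOn (· ≥ ·) F :=
  fun a ha b hb => ⟨a ⊓ b, hF.inf_mem ha hb, inf_le_left, inf_le_right⟩

theorem adjoin (hG : IsSLFilter G) (x : L) : IsSLFilter {v | ∃ g ∈ G, g ⊓ x ≤ v} := by
  obtain ⟨g, hg⟩ := hG.nonempty
  refine ⟨⟨x, g, hg, inf_le_right⟩, ?_, ?_⟩
  · rintro u v ⟨g, hg, hgu⟩ huv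
    exact ⟨g, hg, hgu.trans huv⟩
  · rintro u v ⟨g₁, hg₁, hu⟩ ⟨g₂, hg₂, hv⟩
    refine ⟨g₁ ⊓ g₂, hG.inf_mem hg₁ hg₂, le_inf ?_ ?_⟩
    · exact (inf_le_inf_right x inf_le_left).trans hu
    · exact (inf_le_inf_right x inf_le_right).trans hv

end IsSLFilter

theorem isSLFilter_Ici (a : L) : IsSLFilter (Set.Ici a) :=
  ⟨⟨a, le_rfl⟩, fun _ _ hx hxy => hx.trans hxy, fun _ _ hx hy => le_inf hx hy⟩

theorem isSLFilter_sUnion {c : Set (Set L)} (hc : ∀ F ∈ c, IsSLFilter F)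
    (hchain : IsChain (· ⊆ ·) c) (hne : c.Nonempty) : IsSLFilter (⋃₀ c) := by
  obtain ⟨F, hF⟩ := hne
  obtain ⟨x, hx⟩ := (hc F hF).nonempty
  refine ⟨⟨x, F, hF, hx⟩, ?_, ?_⟩
  · rintro u v ⟨F, hF, hu⟩ huv
    exact ⟨F, hF, (hc F hF).mem_of_le hu huv⟩
  · rintro u v ⟨F₁, hF₁, hu⟩ ⟨F₂, hF₂, hv⟩
    rcases hchain.total hF₁ hF₂ with h | h
    · exact ⟨F₂, hF₂, (hc F₂ hF₂).inf_mem (h hu) hv⟩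
    · exact ⟨F₁, hF₁, (hc F₁ hF₁).inf_mem hu (h hv)⟩

theorem IsDistribSL.directedOn_inf_le (hd : IsDistribSL L) (y b : L) :
    DirectedOn (· ≤ ·) {q | y ⊓ q ≤ b} := by
  intro z₁ h₁ z₂ h₂
  obtain ⟨p, q, hyp, hzq, rfl⟩ := hd b y z₂ h₂
  obtain ⟨p', q', hyp', hzq', rfl⟩ := hd q y z₁ (h₁.trans inf_le_right)
  exact ⟨q', le_inf (inf_le_left.trans hyp) (inf_le_inf_right q' hyp'), hzq',
    hzq.trans inf_le_right⟩

theorem exists_inf_le_of_maximal (hG : Maximal (fun F => IsSLFilter F ∧ b ∉ F) G) {x : L}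
    (hx : x ∉ G) : ∃ g ∈ G, g ⊓ x ≤ b := by
  by_contra! h
  have hadjoin : {v | ∃ g ∈ G, g ⊓ x ≤ v} ⊆ G :=
    hG.2 ⟨hG.1.1.adjoin x, fun ⟨g, hg, hgb⟩ => h g hg hgb⟩ fun g hg => ⟨g, hg, inf_le_left⟩
  obtain ⟨g, hg⟩ := hG.1.1.nonempty
  exact hx (hadjoin ⟨g, hg, inf_le_right⟩)

theorem isFrinkIdeal_compl_of_maximal (hd : IsDistribSL L)
    (hG : Maximal (fun F => IsSLFilter F ∧ b ∉ F) G) : IsFrinkIdeal Gᶜ := by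
  refine ⟨⟨b, hG.1.2⟩, fun A hA hAG c hc hcG => ?_⟩
  choose! g hgG hgb using fun x (hx : x ∈ A) => exists_inf_le_of_maximal hG (hAG hx)
  obtain ⟨g₀, hg₀G, hg₀⟩ := hG.1.1.directedOn_ge.exists_mem_forall_rel_of_finset hA hgG
  obtain ⟨q, hq, hAq⟩ := (hd.directedOn_inf_le g₀ b).exists_mem_forall_rel_of_finset hA
    (f := id) fun x hx => (inf_le_inf_right x (hg₀ x hx)).trans (hgb x hx)
  have hcq : c ≤ q := hc (Set.mem_iInter₂.mpr hAq)
  exact hG.1.2 (hG.1.1.mem_of_le (hG.1.1.inf_mem hg₀G hcG) ((inf_le_inf_left g₀ hcq).trans hq))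

theorem exists_isOptimalFilter_of_not_le (hd : IsDistribSL L) (hab : ¬a ≤ b) :
    ∃ F, IsOptimalFilter F ∧ a ∈ F ∧ b ∉ F := by
  obtain ⟨G, haG, hG⟩ := zorn_subset_nonempty {F : Set L | IsSLFilter F ∧ b ∉ F}
    (fun c hcS hc hne => ⟨⋃₀ c, ⟨isSLFilter_sUnion (fun F hF => (hcS hF).1) hc hne,
      fun ⟨F, hF, hbF⟩ => (hcS hF).2 hbF⟩, fun _ => Set.subset_sUnion_of_mem⟩)
    (Set.Ici a) ⟨isSLFilter_Ici a, hab⟩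
  exact ⟨G, ⟨hG.1.1, isFrinkIdeal_compl_of_maximal hd hG⟩, haG le_rfl, hG.1.2⟩

theorem phiSet_inf (a b : L) : phiSet (a ⊓ b) = phiSet a ∩ phiSet b := by
  ext F
  simp only [phiSet, Set.mem_inter_iff, Set.mem_ofPred]
  constructor
  · rintro ⟨hF, hab⟩
    exact ⟨⟨hF, (hF.1.inf_mem_iff.mp hab).1⟩, hF, (hF.1.inf_mem_iff.mp hab).2⟩
  · rintro ⟨⟨hF, ha⟩, -, hb⟩
    exact ⟨hF, hF.1.inf_mem ha hb⟩

theorem phiSet_subset_phiSet_iff (hd : IsDistribSL L) : phiSet a ⊆ phiSet b ↔ a ≤ b := by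
  refine ⟨fun h => ?_, fun hab F ⟨hF, haF⟩ => ⟨hF, hF.1.mem_of_le haF hab⟩⟩
  by_contra hab
  obtain ⟨F, hF, haF, hbF⟩ := exists_isOptimalFilter_of_not_le hd hab
  exact hbF (h ⟨hF, haF⟩).2

end

theorem phi_is_embedding_general {L : Type*} [SemilatticeInf L]
    (hd : IsDistribSL L) :
    (∀ a b : L, phiSet (a ⊓ b) = phiSet a ∩ phiSet b) ∧
    (∀ a b : L, a ≤ b ↔ phiSet a ⊆ phiSet b) ∧
    Function.Injective (phiSet (L := L)) :=
  ⟨phiSet_inf, fun _ _ => (phiSet_subset_phiSet_iff hd).symm,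
    fun _ _ h => le_antisymm ((phiSet_subset_phiSet_iff hd).mp h.le)
      ((phiSet_subset_phiSet_iff hd).mp h.ge)⟩

/-- φ is an injective meet-semilattice embedding. -/
theorem phi_is_embedding {L : Type*} [SemilatticeInf L] [OrderTop L]
    (hd : IsDistribSL L) :
    (∀ a b : L, phiSet (a ⊓ b) = phiSet a ∩ phiSet b) ∧
    (∀ a b : L, a ≤ b ↔ phiSet a ⊆ phiSet b) ∧
    Function.Injective (phiSet (L := L)) :=
  phi_is_embedding_general hd
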